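/- Fix x > 0 and c > 0. For H > x let z_H denote the unique real number with Φ(z_H) = x/H, where Φ is the standard normal cumulative distribution function, and define g(H) = H·Φ(z_H + c). Then g is differentiable on (x,∞) with g'(H) = Φ(z_H + c) − (x/H)·exp(−c·z_H − c²/2), and g'(H) > 0 for all H > x; in particular g is strictly increasing on (x,∞). -/

import Mathlib

open Real Set Filter MeasureTheory Topology

/-- The standard normal cumulative distribution function. -/
noncomputable def stdNormalCdf : ℝ → ℝ :=
  fun t => ∫ u in Iic t, Real.exp (-u ^ 2 / 2) / Real.sqrt (2 * Real.pi)

/-!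
Write `φ` for the normal density. As `Φ = stdNormalCdf` is strictly increasing with
`Φ' = φ > 0`, the easy half of the inverse function theorem makes `H ↦ z_H` differentiable,
and the chain rule together with `φ(z + c) = φ(z) e^{-cz - c²/2}` gives the formula for `g'`.
Its positivity is the inequality `Φ(z) e^{-cz - c²/2} < Φ(z + c)`, obtained by integrating
`φ(u + c) = φ(u) e^{-cu - c²/2} > φ(u) e^{-cz - c²/2}` over `u < z`.
-/

theorem continuousAt_of_strictMono_comp {X α β : Type*} [TopologicalSpace X]
    [LinearOrder α] [TopologicalSpace α] [OrderTopology α] [PreconnectedSpace α]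
    [ConditionallyCompleteLinearOrder β] [DenselyOrdered β] [TopologicalSpace β]
    [OrderTopology β] {F : α → β} {Z : X → α} {q : X → β} {a : X}
    (hF : StrictMono F) (hFc : Continuous F) (hq : ContinuousAt q a)
    (hcomp : F ∘ Z =ᶠ[𝓝 a] q) : ContinuousAt Z a :=
  (hF.isEmbedding_of_ordConnected (isPreconnected_range hFc).ordConnected).continuousAt_iff.2
    (hq.congr hcomp.symm)

theorem HasDerivAt.of_comp_of_ne_zero {𝕜 : Type*} [NontriviallyNormedField 𝕜]
    {F Z q : 𝕜 → 𝕜} {F' q' a : 𝕜} (hZ : ContinuousAt Z a) (hF : HasDerivAt F F' (Z a))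
    (hF' : F' ≠ 0) (hq : HasDerivAt q q' a) (hcomp : F ∘ Z =ᶠ[𝓝 a] q) :
    HasDerivAt Z (q' / F') a := by
  have := hF.hasFDerivAt.of_comp_of_leftInverse hZ hq.hasFDerivAt hcomp
    (f'symm := ContinuousLinearMap.smulRight (1 : 𝕜 →L[𝕜] 𝕜) F'⁻¹)
    (fun v => by simp [hF'])
  simpa [div_eq_mul_inv, mul_comm] using this.hasDerivAt

section SetIntegralIic

variable {E : Type*} [NormedAddCommGroup E] [NormedSpace ℝ E]

theorem setIntegral_Iic_comp_add_right (f : ℝ → E) (z c : ℝ) :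
    ∫ u in Iic z, f (u + c) = ∫ u in Iic (z + c), f u := by
  have h := (measurePreserving_add_right volume c).setIntegral_preimage_emb
    (measurableEmbedding_addRight c) f (Iic (z + c))
  rwa [show (· + c) ⁻¹' Iic (z + c) = Iic z by ext u; simp] at h

theorem hasDerivAt_setIntegral_Iic [CompleteSpace E] {f : ℝ → E} (hf : Integrable f) {t : ℝ}
    (hft : ContinuousAt f t) : HasDerivAt (fun s => ∫ u in Iic s, f u) (f t) t := by
  have hsplit : (fun s => ∫ u in Iic s, f u) = fun s => (∫ u in Iic 0, f u) + ∫ u in 0..s, f u :=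
    funext fun s => by
      rw [← intervalIntegral.integral_Iic_sub_Iic hf.integrableOn hf.integrableOn]; abel
  rw [hsplit]
  exact (intervalIntegral.integral_hasDerivAt_right hf.intervalIntegrable
    hf.aestronglyMeasurable.stronglyMeasurableAtFilter hft).const_add _

end SetIntegralIic

theorem strictMono_setIntegral_Iic {f : ℝ → ℝ} (hf : Integrable f) (hpos : ∀ u, 0 < f u) :
    StrictMono fun t => ∫ u in Iic t, f u := by
  intro a b hab
  have hsub := intervalIntegral.integral_Iic_sub_Iic (hf.integrableOn (s := Iic a))
    (hf.integrableOn (s := Iic b))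
  have hab_pos := intervalIntegral.intervalIntegral_pos_of_pos hf.intervalIntegrable hpos hab
  dsimp only
  linarith

theorem setIntegral_Iic_pos {f : ℝ → ℝ} {z : ℝ} (hf : IntegrableOn f (Iic z))
    (hnonneg : ∀ u ≤ z, 0 ≤ f u) (hpos : ∀ u < z, 0 < f u) : 0 < ∫ u in Iic z, f u := by
  rw [setIntegral_pos_iff_support_of_nonneg_ae
    ((ae_restrict_iff' measurableSet_Iic).2 (.of_forall hnonneg)) hf]
  calc (0 : ENNReal) < volume (Iio z) := by simp
    _ ≤ volume (Function.support f ∩ Iic z) :=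
      measure_mono fun u hu => ⟨(hpos u hu).ne', mem_Iic.2 (le_of_lt hu)⟩

noncomputable def stdNormalPdf (u : ℝ) : ℝ :=
  exp (-u ^ 2 / 2) / sqrt (2 * π)

theorem stdNormalPdf_pos (u : ℝ) : 0 < stdNormalPdf u := by
  unfold stdNormalPdf; positivity

theorem continuous_stdNormalPdf : Continuous stdNormalPdf := by
  unfold stdNormalPdf; fun_prop

theorem integrable_stdNormalPdf : Integrable stdNormalPdf := by
  have : stdNormalPdf = fun u => exp (-(1 / 2) * u ^ 2) / sqrt (2 * π) := by
    ext u; rw [stdNormalPdf]; ring_nf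
  rw [this]
  exact (integrable_exp_neg_mul_sq (by norm_num)).div_const _

theorem stdNormalPdf_add (u c : ℝ) :
    stdNormalPdf (u + c) = stdNormalPdf u * exp (-c * u - c ^ 2 / 2) := by
  rw [stdNormalPdf, stdNormalPdf, div_mul_eq_mul_div, ← exp_add]
  ring_nf

theorem stdNormalCdf_eq_setIntegral (t : ℝ) : stdNormalCdf t = ∫ u in Iic t, stdNormalPdf u := rfl

theorem hasDerivAt_stdNormalCdf (t : ℝ) : HasDerivAt stdNormalCdf (stdNormalPdf t) t :=
  hasDerivAt_setIntegral_Iic integrable_stdNormalPdf continuous_stdNormalPdf.continuousAt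

theorem continuous_stdNormalCdf : Continuous stdNormalCdf :=
  continuous_iff_continuousAt.2 fun t => (hasDerivAt_stdNormalCdf t).continuousAt

theorem strictMono_stdNormalCdf : StrictMono stdNormalCdf :=
  strictMono_setIntegral_Iic integrable_stdNormalPdf stdNormalPdf_pos

theorem stdNormalCdf_mul_exp_lt_stdNormalCdf_add {c : ℝ} (hc : 0 < c) (z : ℝ) :
    stdNormalCdf z * exp (-c * z - c ^ 2 / 2) < stdNormalCdf (z + c) := by
  set k := exp (-c * z - c ^ 2 / 2)
  have hshift : Integrable fun u => stdNormalPdf (u + c) :=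
    integrable_stdNormalPdf.comp_add_right c
  have hint : ∫ u in Iic z, (stdNormalPdf (u + c) - k * stdNormalPdf u)
      = stdNormalCdf (z + c) - k * stdNormalCdf z := by
    rw [integral_sub hshift.integrableOn (integrable_stdNormalPdf.const_mul k).integrableOn,
      integral_const_mul, setIntegral_Iic_comp_add_right, stdNormalCdf_eq_setIntegral,
      stdNormalCdf_eq_setIntegral]
  have hdiff (u : ℝ) : stdNormalPdf (u + c) - k * stdNormalPdf u
      = stdNormalPdf u * (exp (-c * u - c ^ 2 / 2) - k) := by
    rw [stdNormalPdf_add]; ring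
  have hpos : 0 < ∫ u in Iic z, (stdNormalPdf (u + c) - k * stdNormalPdf u) := by
    refine setIntegral_Iic_pos (hshift.sub (integrable_stdNormalPdf.const_mul k)).integrableOn
      (fun u hu => ?_) (fun u hu => ?_)
    · rw [hdiff]
      exact mul_nonneg (stdNormalPdf_pos u).le
        (sub_nonneg.2 (exp_le_exp.2 (by nlinarith)))
    · rw [hdiff]
      exact mul_pos (stdNormalPdf_pos u) (sub_pos.2 (exp_lt_exp.2 (by nlinarith)))
  linarith

theorem hasDerivAt_mul_stdNormalCdf_quantile_add {x c H : ℝ} {Z : ℝ → ℝ} (hx : 0 < x)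
    (hH : x < H) (hZ : ∀ H > x, stdNormalCdf (Z H) = x / H) :
    HasDerivAt (fun H => H * stdNormalCdf (Z H + c))
      (stdNormalCdf (Z H + c) - x / H * exp (-c * Z H - c ^ 2 / 2)) H := by
  have hH0 : H ≠ 0 := (hx.trans hH).ne'
  have hcomp : stdNormalCdf ∘ Z =ᶠ[𝓝 H] fun H => x / H :=
    eventually_gt_nhds hH |>.mono fun H' hH' => hZ H' hH'
  have hq : HasDerivAt (fun H => x / H) (-x / H ^ 2) H := by
    simpa [div_eq_mul_inv, neg_div] using (hasDerivAt_inv hH0).const_mul x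
  have hZc : ContinuousAt Z H :=
    continuousAt_of_strictMono_comp strictMono_stdNormalCdf continuous_stdNormalCdf
      hq.continuousAt hcomp
  have hZd : HasDerivAt Z (-x / H ^ 2 / stdNormalPdf (Z H)) H :=
    (hasDerivAt_stdNormalCdf _).of_comp_of_ne_zero hZc (stdNormalPdf_pos _).ne' hq hcomp
  have hg : HasDerivAt (fun H => H * stdNormalCdf (Z H + c))
      (1 * stdNormalCdf (Z H + c)
        + H * (stdNormalPdf (Z H + c) * (-x / H ^ 2 / stdNormalPdf (Z H)))) H :=
    (hasDerivAt_id H).mul ((hasDerivAt_stdNormalCdf _).comp H (hZd.add_const c))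
  convert hg using 1
  rw [stdNormalPdf_add]
  field_simp [(stdNormalPdf_pos (Z H)).ne']
  ring

/-- fix `x > 0` and `c > 0`; for `H > x` let `z_H = Φ⁻¹(x/H)`
(characterized by `Φ(z_H) = x/H`) and `g(H) = H Φ(z_H + c)`. Then `g` is
differentiable on `(x,∞)` with
`g'(H) = Φ(z_H + c) - (x/H) e^{-c z_H - c²/2} > 0`, so `g` is strictly
increasing on `(x,∞)`. -/
theorem stmt_14 (x c : ℝ) (hx : 0 < x) (hc : 0 < c)
    (Z : ℝ → ℝ) (hZ : ∀ H > x, stdNormalCdf (Z H) = x / H) :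
    let g : ℝ → ℝ := fun H => H * stdNormalCdf (Z H + c)
    (∀ H > x,
      HasDerivAt g
        (stdNormalCdf (Z H + c) - (x / H) * Real.exp (-c * Z H - c ^ 2 / 2)) H ∧
      0 < stdNormalCdf (Z H + c) - (x / H) * Real.exp (-c * Z H - c ^ 2 / 2)) ∧
    StrictMonoOn g (Ioi x) := by
  intro g
  have hderiv (H : ℝ) (hH : H > x) := hasDerivAt_mul_stdNormalCdf_quantile_add (c := c) hx hH hZ
  have hpos (H : ℝ) (hH : H > x) :
      0 < stdNormalCdf (Z H + c) - (x / H) * Real.exp (-c * Z H - c ^ 2 / 2) := by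
    have := stdNormalCdf_mul_exp_lt_stdNormalCdf_add hc (Z H)
    rw [hZ H hH] at this
    linarith
  refine ⟨fun H hH => ⟨hderiv H hH, hpos H hH⟩, ?_⟩
  refine strictMonoOn_of_hasDerivWithinAt_pos (convex_Ioi x)
    (f' := fun H => stdNormalCdf (Z H + c) - (x / H) * Real.exp (-c * Z H - c ^ 2 / 2))
    (fun H hH => (hderiv H hH).continuousAt.continuousWithinAt) ?_ ?_ <;> rw [interior_Ioi]
  · exact fun H hH => (hderiv H hH).hasDerivWithinAt
  · exact hpos
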